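/- Let A be a densely defined (possibly unbounded) self-adjoint operator on a complex Hilbert space H and let B be a bounded self-adjoint operator on H. Assume BA ⊆ λAB for some complex number λ with AB ≠ 0. Then λ = 1 or λ = −1. -/

import Mathlib

open Complex Set Filter

private lemma norm_exp_le_exp_norm' {𝔸 : Type*} [NormedRing 𝔸] [NormedAlgebra ℂ 𝔸]
    [CompleteSpace 𝔸] (h1 : ‖(1 : 𝔸)‖ ≤ 1) (a : 𝔸) :
    ‖NormedSpace.exp a‖ ≤ Real.exp ‖a‖ := by
  have hpow : ∀ n : ℕ, ‖a ^ n‖ ≤ ‖a‖ ^ n := by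
    intro n
    induction n with
    | zero => simpa using h1
    | succ n ih =>
      rw [pow_succ, pow_succ]
      exact (norm_mul_le _ _).trans (by gcongr)
  rw [NormedSpace.exp_eq_tsum ℂ]
  refine (norm_tsum_le_tsum_norm (NormedSpace.norm_expSeries_summable' a)).trans ?_
  rw [Real.exp_eq_exp_ℝ, NormedSpace.exp_eq_tsum_div]
  refine Summable.tsum_le_tsum (fun n => ?_) (NormedSpace.norm_expSeries_summable' a)
    (Real.summable_pow_div_factorial ‖a‖)
  rw [norm_smul, div_eq_inv_mul]
  have hn : ‖((n.factorial : ℂ))⁻¹‖ = ((n.factorial : ℝ))⁻¹ := by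
    rw [norm_inv]
    norm_num
  rw [hn]
  gcongr
  exact hpow n

private lemma pl_bounded {g : ℂ → ℂ} {C T : ℝ} (hT : 0 ≤ T) (hC : 0 ≤ C)
    (hd : Differentiable ℂ g)
    (hgrow : ∀ s, ‖g s‖ ≤ C * Real.exp (T * ‖s‖))
    {β : ℝ} (hβ0 : 0 < β) (hβπ : β < Real.pi)
    (h1 : ∀ t : ℝ, ‖g ↑t‖ ≤ C)
    (h2 : ∀ t : ℝ, ‖g (Complex.exp (↑β * Complex.I) * ↑t)‖ ≤ C) :
    ∀ s, ‖g s‖ ≤ C := by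
  have hF : Differentiable ℂ fun w => g (Complex.exp w) :=
    hd.comp Complex.differentiable_exp
  have hray : ∀ (θ : ℝ) (z : ℂ), z.im = θ →
      g (Complex.exp z) = g (Complex.exp (↑θ * I) * ↑(Real.exp z.re)) := by
    intro θ z hz
    congr 1
    conv_lhs => rw [← Complex.re_add_im z]
    rw [hz, Complex.exp_add, ← Complex.ofReal_exp, mul_comm]
  have strip : ∀ a b : ℝ, 0 < b - a → b - a < Real.pi →
      (∀ t : ℝ, ‖g (Complex.exp (↑a * I) * ↑t)‖ ≤ C) →
      (∀ t : ℝ, ‖g (Complex.exp (↑b * I) * ↑t)‖ ≤ C) →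
      ∀ z : ℂ, a ≤ z.im → z.im ≤ b → ‖g (Complex.exp z)‖ ≤ C := by
    intro a b hab habπ ha hb z hza hzb
    refine PhragmenLindelof.horizontal_strip (f := fun w => g (Complex.exp w))
      (hF.diffContOnCl) ⟨1, (one_lt_div hab).mpr habπ, T, ?_⟩
      (fun w hw => ?_) (fun w hw => ?_) hza hzb
    · refine Asymptotics.IsBigO.of_bound C (Eventually.of_forall fun w => ?_)
      have h1 : ‖g (Complex.exp w)‖ ≤ C * Real.exp (T * Real.exp w.re) := by
        simpa [Complex.norm_exp] using hgrow (Complex.exp w)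
      refine h1.trans ?_
      rw [Real.norm_eq_abs, abs_of_pos (Real.exp_pos _), one_mul]
      gcongr
      · exact le_abs_self _
    · show ‖g (Complex.exp w)‖ ≤ C
      rw [hray a w hw]; exact ha _
    · show ‖g (Complex.exp w)‖ ≤ C
      rw [hray b w hw]; exact hb _
  -- ray bounds
  have hpi : Complex.exp (↑Real.pi * I) = -1 := Complex.exp_pi_mul_I
  have ray0 : ∀ t : ℝ, ‖g (Complex.exp (↑(0:ℝ) * I) * ↑t)‖ ≤ C := by
    intro t; simpa using h1 t
  have rayπ : ∀ t : ℝ, ‖g (Complex.exp (↑Real.pi * I) * ↑t)‖ ≤ C := by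
    intro t
    rw [hpi]
    have : (-1 : ℂ) * ↑t = ↑(-t) := by push_cast; ring
    rw [this]; exact h1 _
  have raynegπ : ∀ t : ℝ, ‖g (Complex.exp (↑(-Real.pi) * I) * ↑t)‖ ≤ C := by
    intro t
    have : Complex.exp (↑(-Real.pi) * I) = -1 := by
      push_cast
      rw [neg_mul, Complex.exp_neg, hpi]
      norm_num
    rw [this]
    have : (-1 : ℂ) * ↑t = ↑(-t) := by push_cast; ring
    rw [this]; exact h1 _
  have rayβπ : ∀ t : ℝ, ‖g (Complex.exp (↑(β - Real.pi) * I) * ↑t)‖ ≤ C := by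
    intro t
    have hh : Complex.exp (↑(β - Real.pi) * I) = -Complex.exp (↑β * I) := by
      push_cast
      rw [sub_mul, Complex.exp_sub, hpi]
      ring
    rw [hh]
    have : -Complex.exp (↑β * I) * ↑t = Complex.exp (↑β * I) * ↑(-t) := by push_cast; ring
    rw [this]; exact h2 _
  intro s
  by_cases hs : s = 0
  · subst hs
    simpa using h1 0
  set w := Complex.log s with hwdef
  have hw : Complex.exp w = s := Complex.exp_log hs
  have hlo : -Real.pi < w.im := by
    rw [hwdef, Complex.log_im]; exact Complex.neg_pi_lt_arg s
  have hhi : w.im ≤ Real.pi := by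
    rw [hwdef, Complex.log_im]; exact Complex.arg_le_pi s
  rw [← hw]
  rcases le_or_gt w.im (β - Real.pi) with hc | hc
  · exact strip (-Real.pi) (β - Real.pi) (by linarith) (by linarith) raynegπ rayβπ w hlo.le hc
  rcases le_or_gt w.im 0 with hc2 | hc2
  · exact strip (β - Real.pi) 0 (by linarith) (by linarith) rayβπ ray0 w hc.le hc2
  rcases le_or_gt w.im β with hc3 | hc3
  · exact strip 0 β (by linarith) (by linarith) ray0 h2 w hc2.le hc3
  · exact strip β Real.pi (by linarith) (by linarith) h2 rayπ w hc3.le hhi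


open NormedSpace in
private lemma key_inner_zero {H : Type*} [NormedAddCommGroup H] [InnerProductSpace ℂ H]
    [CompleteSpace H]
    (B : H →L[ℂ] H) (hBst : star B = B)
    (A : H →ₗ.[ℂ] H)
    (hsym : ∀ u v : A.domain, (inner ℂ (A u) (v : H) : ℂ) = inner ℂ (u : H) (A v))
    (hdom : ∀ u : A.domain, B (u : H) ∈ A.domain)
    {l : ℂ} (hl1 : l ≠ 1) (hlm1 : l ≠ -1)
    (heq : ∀ u : A.domain, B (A u) = l • A ⟨B (u : H), hdom u⟩) :
    ∀ u v : A.domain, (inner ℂ (A u) (B (v : H)) : ℂ) = 0 := by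
  have hBsa : ∀ a b : H, (inner ℂ (B a) b : ℂ) = inner ℂ a (B b) := by
    intro a b
    conv_lhs => rw [← hBst]
    rw [ContinuousLinearMap.star_eq_adjoint]
    exact ContinuousLinearMap.adjoint_inner_left B b a
  have rule : ∀ u v : A.domain, (inner ℂ (A ⟨B (u:H), hdom u⟩) (v : H) : ℂ)
      = l * inner ℂ (A u) (B (v:H)) := by
    intro u v
    rw [hsym ⟨B (u:H), hdom u⟩ v]
    calc (inner ℂ (B (u:H)) (A v) : ℂ) = inner ℂ ((u:H)) (B (A v)) := hBsa _ _
      _ = inner ℂ ((u:H)) (l • A ⟨B (v:H), hdom v⟩) := by rw [heq v]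
      _ = l * inner ℂ ((u:H)) (A ⟨B (v:H), hdom v⟩) := inner_smul_right _ _ _
      _ = l * inner ℂ (A u) (B (v:H)) := by rw [← hsym u ⟨B (v:H), hdom v⟩]
  by_cases habs : ‖l‖ = 1
  swap
  · -- |l| ≠ 1 : direct algebraic argument
    intro u v
    have e1 : (inner ℂ (A u) (B (v:H)) : ℂ)
        = (starRingEnd ℂ) l * (l * inner ℂ (A u) (B (v:H))) := by
      calc (inner ℂ (A u) (B (v:H)) : ℂ)
          = inner ℂ ((u:H)) (A ⟨B (v:H), hdom v⟩) := hsym u ⟨B (v:H), hdom v⟩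
        _ = (starRingEnd ℂ) (inner ℂ (A ⟨B (v:H), hdom v⟩) ((u:H))) := (inner_conj_symm _ _).symm
        _ = (starRingEnd ℂ) (l * inner ℂ (A v) (B (u:H))) := by rw [rule v u]
        _ = (starRingEnd ℂ) l * (starRingEnd ℂ) (inner ℂ (A v) (B (u:H))) := map_mul _ _ _
        _ = (starRingEnd ℂ) l * inner ℂ (B ((u:H))) ((A v : H)) := by rw [inner_conj_symm]
        _ = (starRingEnd ℂ) l * inner ℂ (A ⟨B (u:H), hdom u⟩) ((v:H)) := by
              rw [hsym ⟨B (u:H), hdom u⟩ v]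
        _ = (starRingEnd ℂ) l * (l * inner ℂ (A u) (B (v:H))) := by rw [rule u v]
    have h2 : ((1 : ℂ) - (starRingEnd ℂ) l * l) * inner ℂ (A u) (B (v:H)) = 0 := by
      linear_combination e1
    have h3 : ((1 : ℂ) - (starRingEnd ℂ) l * l) ≠ 0 := by
      intro h
      apply habs
      have hn : ((Complex.normSq l : ℝ) : ℂ) = 1 := by
        rw [← Complex.mul_conj l]
        linear_combination -h
      have hn' : Complex.normSq l = 1 := by exact_mod_cast hn
      rw [Complex.norm_def, hn', Real.sqrt_one]
    exact (mul_eq_zero.mp h2).resolve_left h3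
  · -- |l| = 1, l not ±1 : analytic argument
    have powmem : ∀ (k : ℕ) (u : A.domain), (B ^ k) (u : H) ∈ A.domain := by
      intro k
      induction k with
      | zero => intro u; simpa using u.2
      | succ k ih =>
        intro u
        have e1 : (B ^ (k+1)) (u:H) = (B ^ k) (B (u:H)) := by rw [pow_succ]; rfl
        rw [e1]
        exact ih ⟨B (u:H), hdom u⟩
    have movepow : ∀ (k : ℕ) (u v : A.domain) (h : (B ^ k) (u:H) ∈ A.domain),
        (inner ℂ (A ⟨(B ^ k) (u:H), h⟩) (v : H) : ℂ) = l ^ k * inner ℂ (A u) ((B ^ k) (v:H)) := by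
      intro k
      induction k with
      | zero =>
        intro u v h
        have : A ⟨(B ^ 0) (u:H), h⟩ = A u := by
          congr 1
        rw [this]
        simp
      | succ k ih =>
        intro u v h
        have e1 : (B ^ (k+1)) (u:H) = (B ^ k) (B (u:H)) := by rw [pow_succ]; rfl
        have e2 : (B ^ (k+1)) (v:H) = B ((B ^ k) (v:H)) := by rw [pow_succ']; rfl
        have h' : (B ^ k) (B (u:H)) ∈ A.domain := e1 ▸ h
        have step1 : A ⟨(B ^ (k+1)) (u:H), h⟩ = A ⟨(B ^ k) (B (u:H)), h'⟩ := by
          congr 1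
        rw [step1]
        calc (inner ℂ (A ⟨(B ^ k) (B (u:H)), h'⟩) (v : H) : ℂ)
            = l ^ k * inner ℂ (A ⟨B (u:H), hdom u⟩) ((B ^ k) (v:H)) := ih ⟨B (u:H), hdom u⟩ v h'
          _ = l ^ k * inner ℂ (A ⟨B (u:H), hdom u⟩)
                ((⟨(B ^ k) (v:H), powmem k v⟩ : A.domain) : H) := rfl
          _ = l ^ k * (l * inner ℂ (A u) (B ((B ^ k) (v:H)))) := by
                rw [rule u ⟨(B ^ k) (v:H), powmem k v⟩]
          _ = l ^ (k+1) * inner ℂ (A u) ((B ^ (k+1)) (v:H)) := by rw [e2]; ring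
    -- find the angle β
    have hexparg : Complex.exp (↑l.arg * Complex.I) = l := by
      conv_rhs => rw [← Complex.norm_mul_exp_arg_mul_I l]
      rw [habs, Complex.ofReal_one, one_mul]
    have hargne0 : l.arg ≠ 0 := by
      intro h; apply hl1; rw [← hexparg, h]; simp
    have hargneπ : l.arg ≠ Real.pi := by
      intro h; apply hlm1; rw [← hexparg, h]
      push_cast
      exact Complex.exp_pi_mul_I
    obtain ⟨β, hβ0, hβπ, hβval⟩ :
        ∃ β : ℝ, 0 < β ∧ β < Real.pi ∧
          (Complex.exp (↑β * Complex.I) = l ∨ Complex.exp (↑β * Complex.I) = -l) := by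
      rcases lt_or_gt_of_ne hargne0 with hneg | hpos
      · have h1 := Complex.neg_pi_lt_arg l
        refine ⟨l.arg + Real.pi, by linarith, by linarith, Or.inr ?_⟩
        push_cast
        rw [add_mul, Complex.exp_add, hexparg, Complex.exp_pi_mul_I]
        ring
      · exact ⟨l.arg, hpos, lt_of_le_of_ne (Complex.arg_le_pi l) hargneπ, Or.inl hexparg⟩
    have hdiag : ∀ x : A.domain, (inner ℂ (A x) (B ((x:H))) : ℂ) = 0 := by
      intro x
      set M : H →L[ℂ] H := Complex.I • B with hM
      set c : ℕ → ℂ := fun k => inner ℂ ((A x : H)) ((B ^ k) (x:H)) with hc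
      set Ψ : (H →L[ℂ] H) →L[ℂ] ℂ :=
        (innerSL ℂ (A x)).comp ((ContinuousLinearMap.apply ℂ H) ((x : A.domain) : H)) with hΨ
      have hΨ_apply : ∀ T : H →L[ℂ] H, Ψ T = inner ℂ ((A x : H)) (T ((x:H))) := fun T => rfl
      set g : ℂ → ℂ := fun s => Ψ (NormedSpace.exp (s • M)) with hg
      have hterm : ∀ (s : ℂ) (n : ℕ), Ψ ((n.factorial : ℂ)⁻¹ • (s • M) ^ n)
          = (n.factorial : ℂ)⁻¹ * ((s * Complex.I) ^ n * c n) := by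
        intro s n
        rw [map_smul, smul_eq_mul]
        congr 1
        have hpow : (s • M) ^ n = (s * Complex.I) ^ n • (B ^ n) := by
          rw [hM, smul_smul, smul_pow]
        rw [hpow, map_smul, smul_eq_mul, hΨ_apply]
      have gser : ∀ s : ℂ, g s = ∑' n : ℕ, (n.factorial : ℂ)⁻¹ * ((s * Complex.I) ^ n * c n) := by
        intro s
        rw [hg]
        show Ψ (NormedSpace.exp (s • M)) = _
        rw [NormedSpace.exp_eq_tsum (𝕂 := ℂ) (𝔸 := H →L[ℂ] H)]
        rw [Ψ.map_tsum (NormedSpace.expSeries_summable' (𝕂 := ℂ) (s • M))]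
        exact tsum_congr (hterm s)
      have conjc : ∀ k : ℕ, (starRingEnd ℂ) (c k) = l ^ k * c k := by
        intro k
        calc (starRingEnd ℂ) (c k) = inner ℂ ((B ^ k) (x:H)) ((A x : H)) := inner_conj_symm _ _
          _ = inner ℂ (A (⟨(B ^ k) (x:H), powmem k x⟩ : A.domain)) ((x : H)) :=
              (hsym ⟨(B ^ k) (x:H), powmem k x⟩ x).symm
          _ = l ^ k * inner ℂ (A x) ((B ^ k) (x:H)) := movepow k x x (powmem k x)
      have funcE : ∀ t : ℝ, (starRingEnd ℂ) (g ↑t) = g (-(l * ↑t)) := by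
        intro t
        rw [gser ((t : ℂ)), gser (-(l * ↑t))]
        rw [starRingEnd_apply, tsum_star]
        refine tsum_congr fun k => ?_
        rw [← starRingEnd_apply]
        have hbase : ((t : ℂ) * -Complex.I) ^ k * l ^ k = (-(l * (t : ℂ)) * Complex.I) ^ k := by
          rw [← mul_pow]; congr 1; ring
        simp only [map_mul, map_pow, map_inv₀, map_natCast, Complex.conj_ofReal, Complex.conj_I,
          conjc k]
        linear_combination ((k.factorial : ℂ))⁻¹ * c k * hbase
      have hCpos : (0:ℝ) ≤ ‖(A x : H)‖ * ‖((x : A.domain) : H)‖ := by positivity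
      have hreal : ∀ t : ℝ, ‖g ↑t‖ ≤ ‖(A x : H)‖ * ‖((x : A.domain) : H)‖ := by
        intro t
        have hstar : star (((t : ℝ) : ℂ) • M) = -((((t : ℝ) : ℂ)) • M) := by
          rw [hM, smul_smul, star_smul, hBst]
          rw [show star (((t : ℝ) : ℂ) * Complex.I) = -(((t : ℝ) : ℂ) * Complex.I) by
            simp [Complex.star_def]]
          rw [neg_smul]
        set U := NormedSpace.exp ((((t : ℝ) : ℂ)) • M) with hU
        have hunit : star U * U = 1 := by
          letI : NormedAlgebra ℚ (H →L[ℂ] H) := .restrictScalars ℚ ℂ (H →L[ℂ] H)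
          rw [hU, NormedSpace.star_exp, hstar,
            ← NormedSpace.exp_add_of_commute ((Commute.refl ((((t : ℝ) : ℂ)) • M)).neg_left),
            neg_add_cancel, NormedSpace.exp_zero]
        have hnorm : ∀ v : H, ‖U v‖ = ‖v‖ := by
          intro v
          have h2 : (inner ℂ (U v) (U v) : ℂ) = inner ℂ v v := by
            calc (inner ℂ (U v) (U v) : ℂ)
                = inner ℂ ((ContinuousLinearMap.adjoint U) (U v)) v :=
                  (ContinuousLinearMap.adjoint_inner_left U v (U v)).symm
              _ = inner ℂ ((star U * U) v) v := by rw [ContinuousLinearMap.star_eq_adjoint]; rfl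
              _ = inner ℂ v v := by rw [hunit]; simp
          have h4 : ‖U v‖ ^ 2 = ‖v‖ ^ 2 := by
            have h3 := congrArg (RCLike.re (K := ℂ)) h2
            rwa [@inner_self_eq_norm_sq ℂ, @inner_self_eq_norm_sq ℂ] at h3
          calc ‖U v‖ = Real.sqrt (‖U v‖ ^ 2) := (Real.sqrt_sq (norm_nonneg _)).symm
            _ = Real.sqrt (‖v‖ ^ 2) := by rw [h4]
            _ = ‖v‖ := Real.sqrt_sq (norm_nonneg _)
        calc ‖g ↑t‖ = ‖(inner ℂ ((A x : H)) (U (((x : A.domain) : H))) : ℂ)‖ := rfl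
          _ ≤ ‖(A x : H)‖ * ‖U (((x : A.domain) : H))‖ := norm_inner_le_norm _ _
          _ = ‖(A x : H)‖ * ‖((x : A.domain) : H)‖ := by rw [hnorm]
      have hgrow : ∀ s : ℂ, ‖g s‖ ≤ (‖(A x : H)‖ * ‖((x : A.domain) : H)‖)
          * Real.exp (‖M‖ * ‖s‖) := by
        intro s
        have hle : ‖NormedSpace.exp (s • M)‖ ≤ Real.exp (‖M‖ * ‖s‖) := by
          refine (norm_exp_le_exp_norm'
            (by rw [ContinuousLinearMap.one_def]; exact ContinuousLinearMap.norm_id_le)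
            (s • M)).trans ?_
          exact le_of_eq (by rw [norm_smul, mul_comm])
        calc ‖g s‖ = ‖(inner ℂ ((A x : H)) ((NormedSpace.exp (s • M)) (((x : A.domain) : H))) : ℂ)‖ := rfl
          _ ≤ ‖(A x : H)‖ * ‖(NormedSpace.exp (s • M)) (((x : A.domain) : H))‖ := norm_inner_le_norm _ _
          _ ≤ ‖(A x : H)‖ * (‖NormedSpace.exp (s • M)‖ * ‖((x : A.domain) : H)‖) :=
              mul_le_mul_of_nonneg_left (ContinuousLinearMap.le_opNorm _ _) (norm_nonneg _)
          _ = (‖(A x : H)‖ * ‖((x : A.domain) : H)‖) * ‖NormedSpace.exp (s • M)‖ := by ring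
          _ ≤ (‖(A x : H)‖ * ‖((x : A.domain) : H)‖) * Real.exp (‖M‖ * ‖s‖) :=
              mul_le_mul_of_nonneg_left hle hCpos
      have hdiffexp : Differentiable ℂ fun s : ℂ => NormedSpace.exp (s • M) := fun s =>
        (hasDerivAt_exp_smul_const (𝕂 := ℂ) M s).differentiableAt
      have hdiffg : Differentiable ℂ g := Ψ.differentiable.comp hdiffexp
      have hlineβ : ∀ t : ℝ, ‖g (Complex.exp (↑β * Complex.I) * ↑t)‖
          ≤ ‖(A x : H)‖ * ‖((x : A.domain) : H)‖ := by
        intro t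
        rcases hβval with h | h
        · rw [h]
          have e : l * ((t : ℝ) : ℂ) = -(l * (((-t : ℝ)) : ℂ)) := by push_cast; ring
          rw [e, ← funcE (-t), RCLike.norm_conj]
          exact hreal (-t)
        · rw [h]
          have e : -l * ((t : ℝ) : ℂ) = -(l * (((t : ℝ)) : ℂ)) := by ring
          rw [e, ← funcE t, RCLike.norm_conj]
          exact hreal t
      have hbd := pl_bounded (norm_nonneg M) hCpos hdiffg hgrow hβ0 hβπ hreal hlineβ
      have hbound : Bornology.IsBounded (Set.range g) := by
        rw [isBounded_iff_forall_norm_le]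
        exact ⟨_, by rintro y ⟨s, rfl⟩; exact hbd s⟩
      have hconst : ∀ s, g s = g 0 := fun s => hdiffg.apply_eq_apply_of_bounded hbound s 0
      have hder1 : HasDerivAt (fun s : ℂ => NormedSpace.exp (s • M)) M 0 := by
        simpa using hasDerivAt_exp_smul_const (𝕂 := ℂ) M (0 : ℂ)
      have hderg : HasDerivAt g (Ψ M) 0 := Ψ.hasFDerivAt.comp_hasDerivAt 0 hder1
      have hzero : HasDerivAt g 0 0 := by
        refine (hasDerivAt_const (0:ℂ) (g 0)).congr_of_eventuallyEq ?_
        exact Filter.Eventually.of_forall fun s => hconst s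
      have hΨM : Ψ M = 0 := hderg.unique hzero
      have h5 : Complex.I * (inner ℂ ((A x : H)) (B ((x : A.domain) : H)) : ℂ) = 0 := by
        rw [← hΨM, hΨ_apply M, hM, ContinuousLinearMap.smul_apply, inner_smul_right]
      rcases mul_eq_zero.mp h5 with h | h
      · exact absurd h Complex.I_ne_zero
      · exact h
    -- polarization
    intro u v
    have e1 := hdiag (u + v)
    have e2 := hdiag (u + Complex.I • v)
    simp only [LinearPMap.map_add, LinearPMap.map_smul, Submodule.coe_add,
      SetLike.val_smul, map_add, map_smul, inner_add_left, inner_add_right,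
      inner_smul_left, inner_smul_right, Complex.conj_I] at e1 e2
    have du := hdiag u
    have dv := hdiag v
    have hsum : (inner ℂ (A u) (B ((v : A.domain) : H)) : ℂ)
        + inner ℂ (A v) (B ((u : A.domain) : H)) = 0 := by
      linear_combination e1 - du - dv
    have hpq : (inner ℂ (A u) (B ((v : A.domain) : H)) : ℂ)
        = inner ℂ (A v) (B ((u : A.domain) : H)) := by
      linear_combination (-Complex.I) * e2 + Complex.I * du + (-Complex.I ^ 3) * dv
        + ((inner ℂ (A u) (B ((v : A.domain) : H)) : ℂ)
            - inner ℂ (A v) (B ((u : A.domain) : H))) * Complex.I_sq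
    linear_combination hsum / 2 + hpq / 2



/-- Composition of two partially defined linear maps, with domain
`{x ∈ D(B) : B x ∈ D(A)}`. -/
noncomputable def LinearPMap.pcomp {R E F G : Type*} [Ring R] [AddCommGroup E] [Module R E]
    [AddCommGroup F] [Module R F] [AddCommGroup G] [Module R G]
    (A : F →ₗ.[R] G) (B : E →ₗ.[R] F) : E →ₗ.[R] G :=
  A.comp (B.domRestrict ((A.domain.comap B.toFun).map B.domain.subtype))
    (fun x => by
      obtain ⟨y, hy, hyx⟩ := Submodule.mem_map.mp x.2.1
      rwa [LinearPMap.domRestrict_apply hyx.symm])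

section helpers

variable {H : Type*} [NormedAddCommGroup H] [InnerProductSpace ℂ H]
variable (A : H →ₗ.[ℂ] H) (B : H →L[ℂ] H)

private lemma pcomp_mem (z : H) :
    z ∈ (A.pcomp ((B : H →ₗ[ℂ] H).toPMap ⊤)).domain ↔ B z ∈ A.domain := by
  constructor
  · intro hz
    have hz' : z ∈ ((A.domain.comap ((B : H →ₗ[ℂ] H).toPMap ⊤).toFun).map
        ((B : H →ₗ[ℂ] H).toPMap ⊤).domain.subtype) ⊓ ((B : H →ₗ[ℂ] H).toPMap ⊤).domain := hz
    obtain ⟨y, hy, hyx⟩ := Submodule.mem_map.mp (Submodule.mem_inf.mp hz').1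
    rw [← hyx]
    exact hy
  · intro hz
    exact Submodule.mem_inf.mpr
      ⟨Submodule.mem_map.mpr ⟨⟨z, trivial⟩, Submodule.mem_comap.mpr hz, rfl⟩, trivial⟩

private lemma pcomp_apply (x : (A.pcomp ((B : H →ₗ[ℂ] H).toPMap ⊤)).domain)
    (h : B (x : H) ∈ A.domain) :
    A.pcomp ((B : H →ₗ[ℂ] H).toPMap ⊤) x = A ⟨B (x : H), h⟩ := rfl

end helpers

theorem stmt_10 {H : Type*} [NormedAddCommGroup H] [InnerProductSpace ℂ H] [CompleteSpace H]
    (A : H →ₗ.[ℂ] H) (B : H →L[ℂ] H) (l : ℂ)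
    (hA_dense : Dense (A.domain : Set H)) (hA : A.adjoint = A)
    (hB : ContinuousLinearMap.adjoint B = B)
    (hcomm : (B : H →ₗ[ℂ] H).compPMap A ≤ l • A.pcomp ((B : H →ₗ[ℂ] H).toPMap ⊤))
    (hne : A.pcomp ((B : H →ₗ[ℂ] H).toPMap ⊤) ≠ 0) :
    l = 1 ∨ l = -1 := by
  by_contra hcon
  push_neg at hcon
  obtain ⟨hl1, hlm1⟩ := hcon
  have hBst : star B = B := by rw [ContinuousLinearMap.star_eq_adjoint, hB]
  have hBsa : ∀ a b : H, (inner ℂ (B a) b : ℂ) = inner ℂ a (B b) := by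
    intro a b
    conv_lhs => rw [← hBst]
    rw [ContinuousLinearMap.star_eq_adjoint]
    exact ContinuousLinearMap.adjoint_inner_left B b a
  have hFA := LinearPMap.adjoint_isFormalAdjoint hA_dense
  rw [hA] at hFA
  have hsym : ∀ u v : A.domain, (inner ℂ (A u) ((v : A.domain) : H) : ℂ) = inner ℂ ((u:H)) (A v) :=
    fun u v => hFA u v
  obtain ⟨hdle, hdeq⟩ := hcomm
  have hdom : ∀ u : A.domain, B (u:H) ∈ A.domain := by
    intro u
    have hu : (u:H) ∈ (A.pcomp ((B : H →ₗ[ℂ] H).toPMap ⊤)).domain := by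
      have h2 := hdle u.2
      rwa [LinearPMap.smul_domain] at h2
    exact (pcomp_mem A B _).mp hu
  have heq : ∀ u : A.domain, B (A u) = l • A ⟨B (u:H), hdom u⟩ := by
    intro u
    have hu : (u:H) ∈ (l • A.pcomp ((B : H →ₗ[ℂ] H).toPMap ⊤)).domain := hdle u.2
    have h2 := hdeq (x := u) (y := ⟨(u:H), hu⟩) rfl
    change B (A u) = _ at h2
    rw [LinearPMap.smul_apply] at h2
    rw [pcomp_apply A B ⟨(u:H), hu⟩ (hdom u)] at h2
    simpa using h2
  have hzero := key_inner_zero B hBst A hsym hdom hl1 hlm1 heq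
  have hBA0 : ∀ u : A.domain, B (A u) = 0 := by
    intro u
    apply hA_dense.eq_zero_of_inner_left ℂ
    intro v hv
    rw [hBsa (A u) v]
    exact hzero u ⟨v, hv⟩
  have hmem0 : ∀ z : H, B z ∈ A.domain := by
    intro z
    have hmemadj : B z ∈ A.adjoint.domain := by
      apply LinearPMap.mem_adjoint_domain_of_exists
      refine ⟨0, fun w => ?_⟩
      rw [inner_zero_left] 
      have h1 : (inner ℂ (B z) (A w) : ℂ) = inner ℂ z (B (A w)) := hBsa _ _
      rw [h1, hBA0 w, inner_zero_right]
    rwa [hA] at hmemadj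
  have hval0 : ∀ (z : H) (h : B z ∈ A.domain), A ⟨B z, h⟩ = 0 := by
    intro z h
    have hmemadj : B z ∈ A.adjoint.domain := by rw [hA]; exact h
    have hv : A.adjoint ⟨B z, hmemadj⟩ = 0 := by
      apply LinearPMap.adjoint_apply_eq hA_dense
      intro w
      rw [inner_zero_left]
      have h1 : (inner ℂ (B z) (A w) : ℂ) = inner ℂ z (B (A w)) := hBsa _ _
      rw [h1, hBA0 w, inner_zero_right]
    obtain ⟨hde, hap⟩ := LinearPMap.ext_iff.mp hA
    rw [← hv]
    exact (hap (x := B z) (hf := hmemadj) (hg := h)).symm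
  apply hne
  have hdt : (A.pcomp ((B : H →ₗ[ℂ] H).toPMap ⊤)).domain = ⊤ := by
    rw [eq_top_iff]
    intro z _
    exact (pcomp_mem A B z).mpr (hmem0 z)
  refine LinearPMap.ext (hdt.trans LinearPMap.zero_domain.symm) ?_
  intro x y hxy
  rw [pcomp_apply A B ⟨x, y⟩ (hmem0 _)]
  exact hval0 _ _
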